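/- For all vectors r, s ∈ ℝ³, |r ∧ s|² ≤ |r|·|r−s|²·|s|, where ∧ denotes the cross product. -/

import Mathlib

/-! Replacing either factor of `r ⨯₃ s` by `r - s` changes the cross product at most by a sign, and
`‖u ⨯₃ v‖ ≤ ‖u‖ ‖v‖` by Lagrange's identity; multiply the bounds for `r ⨯₃ (r - s)` and `(r - s) ⨯₃ s`. -/

/-- The cross product on `EuclideanSpace ℝ (Fin 3)`. -/
noncomputable def cross3 (r s : EuclideanSpace ℝ (Fin 3)) : EuclideanSpace ℝ (Fin 3) :=
  (WithLp.equiv 2 (Fin 3 → ℝ)).symm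
    ![r 1 * s 2 - r 2 * s 1, r 2 * s 0 - r 0 * s 2, r 0 * s 1 - r 1 * s 0]

open Matrix WithLp

lemma cross3_eq_crossProduct (r s : EuclideanSpace ℝ (Fin 3)) :
    cross3 r s = toLp 2 (ofLp r ⨯₃ ofLp s) := by
  rw [cross3, cross_apply]; rfl

lemma cross3_self_sub (r s : EuclideanSpace ℝ (Fin 3)) : cross3 r (r - s) = -cross3 r s := by
  simp only [cross3_eq_crossProduct, ofLp_sub, map_sub, cross_self, zero_sub, toLp_neg]

lemma cross3_sub_self (r s : EuclideanSpace ℝ (Fin 3)) : cross3 (r - s) s = cross3 r s := by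
  simp only [cross3_eq_crossProduct, ofLp_sub, map_sub, LinearMap.sub_apply, cross_self, sub_zero]

lemma norm_cross3_sq (r s : EuclideanSpace ℝ (Fin 3)) :
    ‖cross3 r s‖ ^ 2 = ‖r‖ ^ 2 * ‖s‖ ^ 2 - inner ℝ r s ^ 2 := by
  simp only [← real_inner_self_eq_norm_sq, cross3_eq_crossProduct,
    EuclideanSpace.inner_eq_star_dotProduct, star_trivial, cross_dot_cross, dotProduct_comm (ofLp s)]
  ring

lemma norm_cross3_le (r s : EuclideanSpace ℝ (Fin 3)) : ‖cross3 r s‖ ≤ ‖r‖ * ‖s‖ := by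
  refine (pow_le_pow_iff_left₀ (norm_nonneg _) (by positivity) two_ne_zero).1 ?_
  rw [norm_cross3_sq, mul_pow]
  exact sub_le_self _ (sq_nonneg _)

theorem cross_sq_le (r s : EuclideanSpace ℝ (Fin 3)) :
    ‖cross3 r s‖ ^ 2 ≤ ‖r‖ * ‖r - s‖ ^ 2 * ‖s‖ :=
  calc ‖cross3 r s‖ ^ 2 = ‖cross3 r (r - s)‖ * ‖cross3 (r - s) s‖ := by
        rw [cross3_self_sub, cross3_sub_self, norm_neg, sq]
    _ ≤ (‖r‖ * ‖r - s‖) * (‖r - s‖ * ‖s‖) := by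
        gcongr <;> exact norm_cross3_le _ _
    _ = ‖r‖ * ‖r - s‖ ^ 2 * ‖s‖ := by ring
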